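/- Let π₀ be a probability measure on ℝ^d with continuous, strictly positive density p₀ with respect to Lebesgue measure, and let h : ℝ^d → ℝ be continuous such that x ↦ (1 + |h(x)|)(1 + e^{−h(x)}) is π₀-integrable. For t ∈ [0,1] let π_t denote the density x ↦ e^{−t·h(x)} p₀(x) / Z_t with Z_t := ∫ e^{−t·h} dπ₀. Let C : [0,1] → ℝ^{d×d} take symmetric positive definite values and let φ : [0,1] × ℝ^d → ℝ be such that φ_t is twice continuously differentiable in x and solves the Poisson equation ∇·( π_t C_t ∇φ_t )(x) = −( h(x) − ∫ h dπ_t ) π_t(x) for all t ∈ (0,1) and x ∈ ℝ^d. Then the curve (π_t) satisfies the continuity equation with velocity field v_t := −C_t ∇φ_t, i.e. ∂_t π_t(x) + ∇·( π_t v_t )(x) = 0 for all t ∈ (0,1) and x ∈ ℝ^d. -/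

import Mathlib

open MeasureTheory Real

/-- Coordinatewise gradient of a scalar function on `ℝ^d`. -/
noncomputable def pgrad {d : ℕ} (f : (Fin d → ℝ) → ℝ) (x : Fin d → ℝ) : Fin d → ℝ :=
  fun i => fderiv ℝ f x (Pi.single i 1)

/-- Divergence of a vector field on `ℝ^d`. -/
noncomputable def pdiv {d : ℕ} (F : (Fin d → ℝ) → (Fin d → ℝ)) (x : Fin d → ℝ) : ℝ :=
  ∑ i, fderiv ℝ (fun y => F y i) x (Pi.single i 1)

/-- The density `e^{-t·h(x)} p₀(x) / Z_t` of the tempered interpolation `π_t`, where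
`Z_t = ∫ e^{-t·h} dπ₀` and `π₀` has density `p₀` with respect to Lebesgue measure. -/
noncomputable def temperedDensity {d : ℕ} (p₀ : (Fin d → ℝ) → ℝ) (h : (Fin d → ℝ) → ℝ)
    (t : ℝ) (x : Fin d → ℝ) : ℝ :=
  Real.exp (-(t * h x)) * p₀ x /
    ∫ y, Real.exp (-(t * h y)) ∂((volume : Measure (Fin d → ℝ)).withDensity
      fun z => ENNReal.ofReal (p₀ z))

/-! Differentiating `Z_t = ∫ e^{-t h} dπ₀` under the integral sign (dominated by
`(1 + |h|)(1 + e^{-h})` for `t ∈ [0, 1]`) gives `∂_t Z_t = -∫ h e^{-t h} dπ₀`, so the quotient rule yields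
`∂_t π_t = -(h - ∫ h dπ_t) π_t`. By the Poisson equation this is `∇·(π_t C_t ∇φ_t) = -∇·(π_t v_t)`. -/

lemma exp_neg_mul_le_one_add_exp_neg {s : ℝ} (hs : s ∈ Set.Icc (0 : ℝ) 1) (a : ℝ) :
    exp (-(s * a)) ≤ 1 + exp (-a) := by
  rcases le_or_gt 0 a with ha | ha
  · calc exp (-(s * a)) ≤ exp 0 := exp_le_exp.2 (by nlinarith [hs.1])
      _ ≤ 1 + exp (-a) := by rw [exp_zero]; linarith [exp_pos (-a)]
  · calc exp (-(s * a)) ≤ exp (-a) := exp_le_exp.2 (by nlinarith [hs.2])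
      _ ≤ 1 + exp (-a) := by linarith

lemma abs_mul_exp_neg_mul_le {s : ℝ} (hs : s ∈ Set.Icc (0 : ℝ) 1) (a : ℝ) :
    |a * exp (-(s * a))| ≤ (1 + |a|) * (1 + exp (-a)) := by
  rw [abs_mul, abs_of_pos (exp_pos _)]
  exact mul_le_mul (by linarith [abs_nonneg a]) (exp_neg_mul_le_one_add_exp_neg hs a)
    (exp_pos _).le (by positivity)

section PartitionFunction

variable {α : Type*} [MeasurableSpace α] {μ : Measure α} {h : α → ℝ}

lemma aestronglyMeasurable_exp_neg_mul (hh : AEStronglyMeasurable h μ) (s : ℝ) :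
    AEStronglyMeasurable (fun x => exp (-(s * h x))) μ :=
  continuous_exp.comp_aestronglyMeasurable (hh.const_mul s).neg

lemma integrable_exp_neg_mul (hh : AEStronglyMeasurable h μ)
    (hint : Integrable (fun x => (1 + |h x|) * (1 + exp (-h x))) μ)
    {s : ℝ} (hs : s ∈ Set.Icc (0 : ℝ) 1) :
    Integrable (fun x => exp (-(s * h x))) μ := by
  refine hint.mono (aestronglyMeasurable_exp_neg_mul hh s) (.of_forall fun x => ?_)
  rw [norm_of_nonneg (exp_pos _).le, norm_of_nonneg (by positivity)]
  nlinarith [exp_neg_mul_le_one_add_exp_neg hs (h x), abs_nonneg (h x), exp_pos (-h x)]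

lemma hasDerivAt_integral_exp_neg_mul (hh : AEStronglyMeasurable h μ)
    (hint : Integrable (fun x => (1 + |h x|) * (1 + exp (-h x))) μ)
    {t : ℝ} (ht : t ∈ Set.Ioo (0 : ℝ) 1) :
    HasDerivAt (fun s => ∫ x, exp (-(s * h x)) ∂μ) (-∫ x, h x * exp (-(t * h x)) ∂μ) t := by
  rw [← integral_neg]
  refine (hasDerivAt_integral_of_dominated_loc_of_deriv_le
    (F' := fun s x => -(h x * exp (-(s * h x)))) (Icc_mem_nhds ht.1 ht.2)
    (.of_forall (aestronglyMeasurable_exp_neg_mul hh))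
    (integrable_exp_neg_mul hh hint (Set.Ioo_subset_Icc_self ht))
    (hh.mul (aestronglyMeasurable_exp_neg_mul hh t)).neg
    (.of_forall fun x s hs => ?_) hint (.of_forall fun x s _ => ?_)).2
  · rw [norm_neg, norm_eq_abs]
    exact abs_mul_exp_neg_mul_le hs (h x)
  · exact (hasDerivAt_mul_const (h x)).fun_neg.exp.congr_deriv (by ring)

end PartitionFunction

lemma pdiv_neg {d : ℕ} (F : (Fin d → ℝ) → (Fin d → ℝ)) (x : Fin d → ℝ) :
    pdiv (fun y => -F y) x = -pdiv F x := by
  simp only [pdiv, Pi.neg_apply, fderiv_fun_neg, neg_apply, Finset.sum_neg_distrib]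

lemma hasDerivAt_temperedDensity {d : ℕ} {p₀ h : (Fin d → ℝ) → ℝ}
    [NeZero ((volume : Measure (Fin d → ℝ)).withDensity fun z => ENNReal.ofReal (p₀ z))]
    (hh : AEStronglyMeasurable h
      ((volume : Measure (Fin d → ℝ)).withDensity fun z => ENNReal.ofReal (p₀ z)))
    (hint : Integrable (fun x => (1 + |h x|) * (1 + exp (-h x)))
      ((volume : Measure (Fin d → ℝ)).withDensity fun z => ENNReal.ofReal (p₀ z)))
    {t : ℝ} (ht : t ∈ Set.Ioo (0 : ℝ) 1) (x : Fin d → ℝ) :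
    HasDerivAt (fun s => temperedDensity p₀ h s x)
      (-(h x - (∫ y, h y * exp (-(t * h y))
            ∂((volume : Measure (Fin d → ℝ)).withDensity fun z => ENNReal.ofReal (p₀ z))) /
          ∫ y, exp (-(t * h y))
            ∂((volume : Measure (Fin d → ℝ)).withDensity fun z => ENNReal.ofReal (p₀ z)))
        * temperedDensity p₀ h t x) t := by
  have hZ := integral_exp_pos (integrable_exp_neg_mul hh hint
    (Set.Ioo_subset_Icc_self ht))
  have hnum : HasDerivAt (fun s => exp (-(s * h x)) * p₀ x)
      (-(h x * exp (-(t * h x)) * p₀ x)) t :=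
    ((hasDerivAt_mul_const (h x)).fun_neg.exp.mul_const (p₀ x)).congr_deriv (by ring)
  refine (hnum.div (hasDerivAt_integral_exp_neg_mul hh hint ht)
    hZ.ne').congr_deriv ?_
  simp only [temperedDensity]
  field_simp
  ring

theorem stmt16_general {d : ℕ} (p₀ : (Fin d → ℝ) → ℝ)
    (hprob : IsProbabilityMeasure ((volume : Measure (Fin d → ℝ)).withDensity
      fun z => ENNReal.ofReal (p₀ z)))
    (h : (Fin d → ℝ) → ℝ) (hh_cont : Continuous h)
    (hint : Integrable (fun x => (1 + |h x|) * (1 + Real.exp (-h x)))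
      ((volume : Measure (Fin d → ℝ)).withDensity fun z => ENNReal.ofReal (p₀ z)))
    (C : ℝ → Matrix (Fin d) (Fin d) ℝ)
    (φ : ℝ → (Fin d → ℝ) → ℝ)
    (hPoisson : ∀ t ∈ Set.Ioo (0 : ℝ) 1, ∀ x : Fin d → ℝ,
      pdiv (fun y => temperedDensity p₀ h t y • (C t).mulVec (pgrad (φ t) y)) x
        = -(h x -
            (∫ y, h y * Real.exp (-(t * h y))
                ∂((volume : Measure (Fin d → ℝ)).withDensity
                  fun z => ENNReal.ofReal (p₀ z))) /
              ∫ y, Real.exp (-(t * h y))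
                ∂((volume : Measure (Fin d → ℝ)).withDensity
                  fun z => ENNReal.ofReal (p₀ z)))
          * temperedDensity p₀ h t x) :
    ∀ t ∈ Set.Ioo (0 : ℝ) 1, ∀ x : Fin d → ℝ,
      HasDerivAt (fun s => temperedDensity p₀ h s x)
        (-pdiv (fun y =>
          temperedDensity p₀ h t y • (-(C t).mulVec (pgrad (φ t) y))) x) t := by
  intro t ht x
  simp only [smul_neg, pdiv_neg, neg_neg, hPoisson t ht x]
  exact hasDerivAt_temperedDensity hh_cont.aestronglyMeasurable hint ht x

/-- If `φ_t` solves the Poisson equation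
`∇·(π_t C_t ∇φ_t) = -(h - ∫ h dπ_t) π_t`, then the tempered interpolation `(π_t)` solves
the continuity equation `∂_t π_t + ∇·(π_t v_t) = 0` with velocity `v_t = -C_t ∇φ_t`. -/
theorem stmt16 {d : ℕ} (p₀ : (Fin d → ℝ) → ℝ) (hp₀_cont : Continuous p₀)
    (hp₀_pos : ∀ x, 0 < p₀ x)
    (hprob : IsProbabilityMeasure ((volume : Measure (Fin d → ℝ)).withDensity
      fun z => ENNReal.ofReal (p₀ z)))
    (h : (Fin d → ℝ) → ℝ) (hh_cont : Continuous h)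
    (hint : Integrable (fun x => (1 + |h x|) * (1 + Real.exp (-h x)))
      ((volume : Measure (Fin d → ℝ)).withDensity fun z => ENNReal.ofReal (p₀ z)))
    (C : ℝ → Matrix (Fin d) (Fin d) ℝ)
    (hC : ∀ t ∈ Set.Icc (0 : ℝ) 1, (C t).IsSymm ∧ (C t).PosDef)
    (φ : ℝ → (Fin d → ℝ) → ℝ) (hφ : ∀ t, ContDiff ℝ 2 (φ t))
    (hPoisson : ∀ t ∈ Set.Ioo (0 : ℝ) 1, ∀ x : Fin d → ℝ,
      pdiv (fun y => temperedDensity p₀ h t y • (C t).mulVec (pgrad (φ t) y)) x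
        = -(h x -
            (∫ y, h y * Real.exp (-(t * h y))
                ∂((volume : Measure (Fin d → ℝ)).withDensity
                  fun z => ENNReal.ofReal (p₀ z))) /
              ∫ y, Real.exp (-(t * h y))
                ∂((volume : Measure (Fin d → ℝ)).withDensity
                  fun z => ENNReal.ofReal (p₀ z)))
          * temperedDensity p₀ h t x) :
    ∀ t ∈ Set.Ioo (0 : ℝ) 1, ∀ x : Fin d → ℝ,
      HasDerivAt (fun s => temperedDensity p₀ h s x)
        (-pdiv (fun y =>
          temperedDensity p₀ h t y • (-(C t).mulVec (pgrad (φ t) y))) x) t :=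
  stmt16_general p₀ hprob h hh_cont hint C φ hPoisson
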